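/- (Integrated MSE convergence of the field estimate.) In the binary-sensing model, if the truncation sequence m(n) satisfies m(n) → ∞ as n → ∞, and (1/n) Σ_{j=0}^{m(n)−1} ∫_D |φ_j(x)|² / p_X(x) dx → 0 as n → ∞, then for every measurable f : D → [−a, a] and every zero-mean noise distribution supported in [−b, b], the integrated mean squared error converges: E[‖f − f̂_{n,m(n)}‖²] → 0 as n → ∞. -/

import Mathlib

/-!
Write `w = (x, z, t)` for the location, noise and threshold of one sensor. Then `α̂_j` is the
empirical mean of `n` i.i.d. copies of `c φ_j(x)^* / p_X(x) · sgn(f x + z - t)`. For `|s| ≤ c` the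
uniform threshold makes `sgn(s - t)` average to `s / c`, and the noise has mean zero, so each
summand has mean `α_j` and second moment `c² ∫_D |φ_j|² / p_X`; hence
`E|α̂_j - α_j|² ≤ c² ∫_D |φ_j|² / p_X / n`. By orthonormality and Parseval,
`‖f - f̂_{n,m}‖² = ∑_{j ≥ m} |α_j|² + ∑_{j < m} |α̂_j - α_j|²`, so the integrated MSE is at most the
tail `ε[f, m(n)]`, which vanishes as `m(n) → ∞`, plus `c² / n ∑_{j < m(n)} ∫_D |φ_j|² / p_X`,
which vanishes by hypothesis.
-/

open MeasureTheory ProbabilityTheory Filter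
open scoped ENNReal Topology

noncomputable section

/-- Sign function: `+1` if `u > 0` and `-1` otherwise. -/
def sgn' (u : ℝ) : ℝ := if 0 < u then 1 else -1

/-- Binary-quantized observation of sensor `i`: `B i = sgn (f (X i) + Z i - T i)`. -/
def obsB {E Ω : Type*} (f : E → ℝ) (X : ℕ → Ω → E) (Z T : ℕ → Ω → ℝ)
    (i : ℕ) (ω : Ω) : ℝ :=
  sgn' (f (X i ω) + Z i ω - T i ω)

/-- Estimate of the `j`-th coefficient from the first `n` sensors:
`α̂_j = (c/n) ∑_{i<n} (φ_j(X_i))^* / p_X(X_i) * B_i`. -/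
def alphaHat {E Ω : Type*} (c : ℝ) (pX : E → ℝ) (φ : ℕ → E → ℂ) (f : E → ℝ)
    (X : ℕ → Ω → E) (Z T : ℕ → Ω → ℝ) (n j : ℕ) (ω : Ω) : ℂ :=
  ((c : ℂ) / (n : ℂ)) * ∑ i ∈ Finset.range n,
    (starRingEnd ℂ) (φ j (X i ω)) / (pX (X i ω) : ℂ) * (obsB f X Z T i ω : ℂ)

/-- The `j`-th coefficient of the field `f`: `α_j = ⟨f, φ_j⟩ = ∫_D f (φ_j)^*`. -/
def coeff {E : Type*} [MeasureSpace E] (D : Set E) (f : E → ℝ) (φ : ℕ → E → ℂ)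
    (j : ℕ) : ℂ :=
  ∫ x in D, (f x : ℂ) * (starRingEnd ℂ) (φ j x)

/-- The `m`-term field estimate `f̂_{n,m} = ∑_{j<m} α̂_j φ_j`. -/
def fieldEst {E Ω : Type*} (c : ℝ) (pX : E → ℝ) (φ : ℕ → E → ℂ) (f : E → ℝ)
    (X : ℕ → Ω → E) (Z T : ℕ → Ω → ℝ) (n m : ℕ) (x : E) (ω : Ω) : ℂ :=
  ∑ j ∈ Finset.range m, alphaHat c pX φ f X Z T n j ω * φ j x

/-- The `m`-term approximation `f_m = ∑_{j<m} α_j φ_j`. -/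
def mApprox {E : Type*} [MeasureSpace E] (D : Set E) (f : E → ℝ) (φ : ℕ → E → ℂ)
    (m : ℕ) (x : E) : ℂ :=
  ∑ j ∈ Finset.range m, coeff D f φ j * φ j x

/-- The integrated mean squared error `E[‖f - f̂_{n,m}‖²]`. -/
def intMSE {E Ω : Type*} [MeasureSpace E] [MeasurableSpace Ω] (P : Measure Ω)
    (D : Set E) (c : ℝ) (pX : E → ℝ) (φ : ℕ → E → ℂ) (f : E → ℝ)
    (X : ℕ → Ω → E) (Z T : ℕ → Ω → ℝ) (n m : ℕ) : ℝ :=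
  ∫ ω, (∫ x in D, ‖(f x : ℂ) - fieldEst c pX φ f X Z T n m x ω‖ ^ 2) ∂P

/-- The `m`-term approximation error `ε[f,m] = ∑_{j≥m} |α_j|²`. -/
def tailErr {E : Type*} [MeasureSpace E] (D : Set E) (f : E → ℝ) (φ : ℕ → E → ℂ)
    (m : ℕ) : ℝ :=
  ∑' j : ℕ, ‖coeff D f φ (m + j)‖ ^ 2

/-- The deployment distribution: density `p_X` (w.r.t. Lebesgue measure) on `D`. -/
def deployLaw {E : Type*} [MeasureSpace E] (D : Set E) (pX : E → ℝ) : Measure E :=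
  (volume.restrict D).withDensity fun x => ENNReal.ofReal (pX x)

/-- The threshold distribution: uniform on `[-c, c]`. -/
def threshLaw (c : ℝ) : Measure ℝ :=
  (ENNReal.ofReal (1 / (2 * c))) • volume.restrict (Set.Icc (-c) c)

end

open Finset
open scoped ComplexConjugate

lemma Complex.sq_norm_eq_re_sq_add_im_sq (z : ℂ) : ‖z‖ ^ 2 = z.re ^ 2 + z.im ^ 2 := by
  rw [Complex.sq_norm, Complex.normSq_apply, sq, sq]

section ComplexVariance

variable {Ω : Type*} [MeasurableSpace Ω] {P : Measure Ω} {Y : Ω → ℂ}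

lemma integral_norm_sub_integral_sq [IsFiniteMeasure P] (hY : MemLp Y 2 P) :
    ∫ ω, ‖Y ω - ∫ ω', Y ω' ∂P‖ ^ 2 ∂P
      = Var[fun ω => (Y ω).re; P] + Var[fun ω => (Y ω).im; P] := by
  have hre : MemLp (fun ω => (Y ω).re) 2 P := hY.re
  have him : MemLp (fun ω => (Y ω).im) 2 P := hY.im
  have hint := hY.integrable one_le_two
  have hre' : ∫ ω, (Y ω).re ∂P = (∫ ω, Y ω ∂P).re := integral_re hint
  have him' : ∫ ω, (Y ω).im ∂P = (∫ ω, Y ω ∂P).im := integral_im hint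
  rw [variance_eq_integral hre.aemeasurable, variance_eq_integral him.aemeasurable, hre', him',
    ← integral_add]
  · simp only [← Complex.sub_re, ← Complex.sub_im, Complex.sq_norm_eq_re_sq_add_im_sq]
  · exact (hre.sub (memLp_const _)).integrable_sq
  · exact (him.sub (memLp_const _)).integrable_sq

lemma variance_re_add_variance_im_le [IsProbabilityMeasure P] (hY : MemLp Y 2 P) :
    Var[fun ω => (Y ω).re; P] + Var[fun ω => (Y ω).im; P] ≤ ∫ ω, ‖Y ω‖ ^ 2 ∂P := by
  have hre : MemLp (fun ω => (Y ω).re) 2 P := hY.re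
  have him : MemLp (fun ω => (Y ω).im) 2 P := hY.im
  simp only [Complex.sq_norm_eq_re_sq_add_im_sq]
  rw [integral_add hre.integrable_sq him.integrable_sq]
  exact add_le_add (variance_le_expectation_sq hre.1) (variance_le_expectation_sq him.1)

end ComplexVariance

section EmpiricalMean

variable {Ω S : Type*} [MeasurableSpace Ω] [MeasurableSpace S] {P : Measure Ω} {μ : Measure S}
  {W : ℕ → Ω → S}

lemma memLp_empiricalMean (hW : ∀ i, AEMeasurable (W i) P) (hlaw : ∀ i, P.map (W i) = μ)
    {h : S → ℂ} (hh : MemLp h 2 μ) (n : ℕ) :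
    MemLp (fun ω => (n : ℂ)⁻¹ * ∑ i ∈ range n, h (W i ω)) 2 P := by
  have hsum := memLp_finsetSum (range n) fun i _ => (hlaw i ▸ hh).comp_of_map (hW i)
  simpa [Function.comp_def] using hsum.const_mul (n : ℂ)⁻¹

lemma integral_empiricalMean (hW : ∀ i, AEMeasurable (W i) P) (hlaw : ∀ i, P.map (W i) = μ)
    {h : S → ℂ} (hh : Integrable h μ) {n : ℕ} (hn : n ≠ 0) :
    ∫ ω, (n : ℂ)⁻¹ * ∑ i ∈ range n, h (W i ω) ∂P = ∫ s, h s ∂μ := by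
  have hmap : ∀ i, ∫ ω, h (W i ω) ∂P = ∫ s, h s ∂μ := fun i => by
    rw [← hlaw i, integral_map (hW i) (hlaw i ▸ hh.1)]
  rw [integral_const_mul, integral_finsetSum (f := fun i ω => h (W i ω)) _ fun i _ =>
    (integrable_map_measure (hlaw i ▸ hh.1) (hW i)).mp (hlaw i ▸ hh)]
  simp only [hmap, sum_const, card_range, nsmul_eq_mul]
  field_simp

lemma variance_empiricalMean (hW : ∀ i, Measurable (W i)) (hlaw : ∀ i, P.map (W i) = μ)
    (hind : Pairwise fun i k => W i ⟂ᵢ[P] W k) {u : S → ℝ} (hu : Measurable u)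
    (hu2 : MemLp u 2 μ) (n : ℕ) :
    Var[fun ω => (n : ℝ)⁻¹ * ∑ i ∈ range n, u (W i ω); P] = Var[u; μ] / n := by
  have hsum : (fun ω => ∑ i ∈ range n, u (W i ω)) = ∑ i ∈ range n, u ∘ W i := by
    ext ω; simp
  have hvar : ∀ i, Var[u ∘ W i; P] = Var[u; μ] := fun i => by
    rw [← variance_map (hlaw i ▸ hu.aemeasurable) (hW i).aemeasurable, hlaw i]
  rw [variance_const_mul, hsum, IndepFun.variance_sum
    (fun i _ => (hlaw i ▸ hu2).comp_of_map (hW i).aemeasurable)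
    (fun i _ k _ hik => (hind hik).comp hu hu)]
  simp only [hvar, sum_const, card_range, nsmul_eq_mul]
  rcases n.eq_zero_or_pos with rfl | hn
  · simp
  · field_simp

lemma integral_norm_empiricalMean_sub_sq_le [IsProbabilityMeasure P] (hW : ∀ i, Measurable (W i))
    (hlaw : ∀ i, P.map (W i) = μ) (hind : Pairwise fun i k => W i ⟂ᵢ[P] W k) {h : S → ℂ}
    (hh : Measurable h) (hh2 : MemLp h 2 μ) {n : ℕ} (hn : n ≠ 0) :
    ∫ ω, ‖(n : ℂ)⁻¹ * ∑ i ∈ range n, h (W i ω) - ∫ s, h s ∂μ‖ ^ 2 ∂P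
      ≤ (∫ s, ‖h s‖ ^ 2 ∂μ) / n := by
  have : IsProbabilityMeasure μ := hlaw 0 ▸ Measure.isProbabilityMeasure_map (hW 0).aemeasurable
  have hWae : ∀ i, AEMeasurable (W i) P := fun i => (hW i).aemeasurable
  have hre : ∀ ω, ((n : ℂ)⁻¹ * ∑ i ∈ range n, h (W i ω)).re
      = (n : ℝ)⁻¹ * ∑ i ∈ range n, (h (W i ω)).re := fun ω => by
    simp [Complex.re_sum]
  have him : ∀ ω, ((n : ℂ)⁻¹ * ∑ i ∈ range n, h (W i ω)).im
      = (n : ℝ)⁻¹ * ∑ i ∈ range n, (h (W i ω)).im := fun ω => by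
    simp [Complex.im_sum]
  rw [← integral_empiricalMean hWae hlaw (hh2.integrable one_le_two) hn,
    integral_norm_sub_integral_sq (memLp_empiricalMean hWae hlaw hh2 n)]
  simp only [hre, him]
  rw [variance_empiricalMean (u := fun s => (h s).re) hW hlaw hind
      (Complex.measurable_re.comp hh) hh2.re,
    variance_empiricalMean (u := fun s => (h s).im) hW hlaw hind
      (Complex.measurable_im.comp hh) hh2.im, ← add_div]
  exact div_le_div_of_nonneg_right (variance_re_add_variance_im_le hh2) n.cast_nonneg

end EmpiricalMean

section OrthonormalExpansion

variable {α : Type*} [MeasurableSpace α] {μ : Measure α} {u v F : α → ℂ} {φ : ℕ → α → ℂ}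

lemma integrable_mul_conj (hu : MemLp u 2 μ) (hv : MemLp v 2 μ) :
    Integrable (fun x => u x * conj (v x)) μ :=
  hu.integrable_mul hv.star

lemma integral_norm_sub_sq (hu : MemLp u 2 μ) (hv : MemLp v 2 μ) :
    ∫ x, ‖u x - v x‖ ^ 2 ∂μ
      = ∫ x, ‖u x‖ ^ 2 ∂μ - 2 * (∫ x, u x * conj (v x) ∂μ).re + ∫ x, ‖v x‖ ^ 2 ∂μ := by
  have hu2 := hu.integrable_norm_pow two_ne_zero
  have hv2 := hv.integrable_norm_pow two_ne_zero
  have huv : Integrable (fun x => 2 * (u x * conj (v x)).re) μ :=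
    (integrable_mul_conj hu hv).re.const_mul 2
  have hre : ∫ x, (u x * conj (v x)).re ∂μ = (∫ x, u x * conj (v x) ∂μ).re :=
    integral_re (integrable_mul_conj hu hv)
  calc ∫ x, ‖u x - v x‖ ^ 2 ∂μ
      = ∫ x, (‖u x‖ ^ 2 - 2 * (u x * conj (v x)).re + ‖v x‖ ^ 2) ∂μ := by
        simp only [Complex.sq_norm, Complex.normSq_sub, sub_add_eq_add_sub]
    _ = _ := by
        rw [integral_add (f := fun x => ‖u x‖ ^ 2 - 2 * (u x * conj (v x)).re) (hu2.sub huv) hv2,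
          integral_sub hu2 huv, integral_const_mul, hre]

lemma integral_sum_mul_conj (hφ : ∀ j, MemLp (φ j) 2 μ) (hv : MemLp v 2 μ) (β : ℕ → ℂ)
    (m : ℕ) :
    ∫ x, (∑ j ∈ range m, β j * φ j x) * conj (v x) ∂μ
      = ∑ j ∈ range m, β j * ∫ x, φ j x * conj (v x) ∂μ := by
  simp_rw [sum_mul, mul_assoc]
  rw [integral_finsetSum _ fun j _ => (integrable_mul_conj (hφ j) hv).const_mul (β j)]
  simp_rw [integral_const_mul]

lemma integral_mul_conj_sum (hF : MemLp F 2 μ) (hφ : ∀ j, MemLp (φ j) 2 μ) (β : ℕ → ℂ)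
    (m : ℕ) :
    ∫ x, F x * conj (∑ j ∈ range m, β j * φ j x) ∂μ
      = ∑ j ∈ range m, conj (β j) * ∫ x, F x * conj (φ j x) ∂μ := by
  simp_rw [map_sum, map_mul, mul_sum, mul_left_comm (F _)]
  rw [integral_finsetSum _ fun j _ => (integrable_mul_conj hF (hφ j)).const_mul _]
  simp_rw [integral_const_mul]

lemma memLp_sum_mul (hφ : ∀ j, MemLp (φ j) 2 μ) (β : ℕ → ℂ) (m : ℕ) :
    MemLp (fun x => ∑ j ∈ range m, β j * φ j x) 2 μ :=
  memLp_finsetSum (range m) fun j _ => (hφ j).const_mul (β j)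

lemma integral_norm_sum_sq_of_orthonormal (hφ : ∀ j, MemLp (φ j) 2 μ)
    (hON : ∀ j k, ∫ x, φ j x * conj (φ k x) ∂μ = if j = k then 1 else 0) (β : ℕ → ℂ) (m : ℕ) :
    ∫ x, ‖∑ j ∈ range m, β j * φ j x‖ ^ 2 ∂μ = ∑ j ∈ range m, ‖β j‖ ^ 2 := by
  have hG := memLp_sum_mul hφ β m
  have hcoeff : ∀ k ∈ range m,
      ∫ x, φ k x * conj (∑ j ∈ range m, β j * φ j x) ∂μ = conj (β k) := fun k hk => by
    rw [integral_mul_conj_sum (hφ k) hφ]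
    simp [hON, hk]
  have : ((∫ x, ‖∑ j ∈ range m, β j * φ j x‖ ^ 2 ∂μ : ℝ) : ℂ) = ∑ j ∈ range m, (‖β j‖ ^ 2 : ℂ) := by
    rw [← integral_complex_ofReal]
    simp_rw [Complex.ofReal_pow, ← Complex.mul_conj']
    rw [integral_sum_mul_conj hφ hG, sum_congr rfl fun k hk => by rw [hcoeff k hk]]
  exact_mod_cast this

lemma integral_norm_sub_sum_sq_of_orthonormal (hF : MemLp F 2 μ) (hφ : ∀ j, MemLp (φ j) 2 μ)
    (hON : ∀ j k, ∫ x, φ j x * conj (φ k x) ∂μ = if j = k then 1 else 0) (β : ℕ → ℂ) (m : ℕ) :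
    ∫ x, ‖F x - ∑ j ∈ range m, β j * φ j x‖ ^ 2 ∂μ
      = ∫ x, ‖F x‖ ^ 2 ∂μ - ∑ j ∈ range m, ‖∫ x, F x * conj (φ j x) ∂μ‖ ^ 2
        + ∑ j ∈ range m, ‖β j - ∫ x, F x * conj (φ j x) ∂μ‖ ^ 2 := by
  rw [integral_norm_sub_sq hF (memLp_sum_mul hφ β m), integral_mul_conj_sum hF hφ,
    integral_norm_sum_sq_of_orthonormal hφ hON]
  have hpt : ∀ β a : ℂ, ‖β - a‖ ^ 2 - ‖a‖ ^ 2 = ‖β‖ ^ 2 - 2 * (conj β * a).re := fun β a => by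
    simp only [Complex.sq_norm, Complex.normSq_apply, Complex.sub_re, Complex.sub_im,
      Complex.mul_re, Complex.conj_re, Complex.conj_im]
    ring
  rw [Complex.re_sum, mul_sum, sub_add_eq_add_sub, add_sub_assoc, ← sum_sub_distrib,
    sub_add_eq_add_sub, add_sub_assoc, ← sum_sub_distrib, sum_congr rfl fun j _ => hpt _ _]

lemma sum_norm_sq_integral_mul_conj_le (hF : MemLp F 2 μ) (hφ : ∀ j, MemLp (φ j) 2 μ)
    (hON : ∀ j k, ∫ x, φ j x * conj (φ k x) ∂μ = if j = k then 1 else 0) (m : ℕ) :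
    ∑ j ∈ range m, ‖∫ x, F x * conj (φ j x) ∂μ‖ ^ 2 ≤ ∫ x, ‖F x‖ ^ 2 ∂μ := by
  set a := fun j => ∫ x, F x * conj (φ j x) ∂μ
  have h := integral_norm_sub_sum_sq_of_orthonormal hF hφ hON a m
  have h0 : 0 ≤ ∫ x, ‖F x - ∑ j ∈ range m, a j * φ j x‖ ^ 2 ∂μ :=
    integral_nonneg fun _ => by positivity
  have hzero : ∑ j ∈ range m, ‖a j - a j‖ ^ 2 = 0 := by simp
  linarith

end OrthonormalExpansion

@[fun_prop]
lemma measurable_sgn' : Measurable sgn' :=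
  Measurable.ite measurableSet_Ioi measurable_const measurable_const

lemma abs_sgn' (u : ℝ) : |sgn' u| = 1 := by
  unfold sgn'; split_ifs <;> simp

lemma sgn'_sub_eq_indicator (s t : ℝ) : sgn' (s - t) = 2 * (Set.Iio s).indicator 1 t - 1 := by
  by_cases h : t < s <;> norm_num [sgn', h]

section Threshold

variable {c : ℝ}

lemma threshLaw_apply (s : Set ℝ) (hs : MeasurableSet s) :
    threshLaw c s = ENNReal.ofReal (1 / (2 * c)) * volume (s ∩ Set.Icc (-c) c) := by
  rw [threshLaw, Measure.smul_apply, Measure.restrict_apply hs, smul_eq_mul]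

lemma isProbabilityMeasure_threshLaw (hc : 0 < c) : IsProbabilityMeasure (threshLaw c) := by
  constructor
  rw [threshLaw_apply _ MeasurableSet.univ, Set.univ_inter, Real.volume_Icc,
    ← ENNReal.ofReal_mul (by positivity)]
  field_simp
  norm_num [two_mul]

lemma integral_sgn'_sub_threshLaw (hc : 0 < c) {s : ℝ} (hs : s ∈ Set.Icc (-c) c) :
    ∫ t, sgn' (s - t) ∂threshLaw c = s / c := by
  have := isProbabilityMeasure_threshLaw hc
  have hIco : Set.Iio s ∩ Set.Icc (-c) c = Set.Ico (-c) s := by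
    ext t
    simp only [Set.mem_inter_iff, Set.mem_Iio, Set.mem_Icc, Set.mem_Ico]
    exact ⟨fun h => ⟨h.2.1, h.1⟩, fun h => ⟨h.2, h.1, h.2.le.trans hs.2⟩⟩
  have hIio : (threshLaw c).real (Set.Iio s) = (s + c) / (2 * c) := by
    rw [measureReal_def, threshLaw_apply _ measurableSet_Iio, hIco, Real.volume_Ico,
      ← ENNReal.ofReal_mul (by positivity),
      ENNReal.toReal_ofReal (mul_nonneg (by positivity) (by linarith [hs.1]))]
    ring
  simp_rw [sgn'_sub_eq_indicator]
  rw [integral_sub ((integrable_const _).indicator measurableSet_Iio |>.const_mul 2)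
    (integrable_const 1), integral_const_mul, integral_indicator_one measurableSet_Iio, hIio,
    integral_const, probReal_univ, one_smul]
  field_simp
  ring

end Threshold

section Deployment

variable {E : Type*} [MeasureSpace E] {D : Set E} {pX : E → ℝ}
  {G : Type*} [NormedAddCommGroup G] [NormedSpace ℝ G]

instance [SFinite (volume : Measure E)] : SFinite (deployLaw D pX) := by
  unfold deployLaw; infer_instance

lemma integral_deployLaw (hD : MeasurableSet D) (hpX : Measurable pX)
    (hpX0 : ∀ x ∈ D, 0 ≤ pX x) (g : E → G) :
    ∫ x, g x ∂deployLaw D pX = ∫ x in D, pX x • g x := by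
  rw [deployLaw, integral_withDensity_eq_integral_toReal_smul hpX.ennreal_ofReal
    (.of_forall fun _ => ENNReal.ofReal_lt_top)]
  exact setIntegral_congr_fun hD fun x hx => by rw [ENNReal.toReal_ofReal (hpX0 x hx)]

lemma integrable_deployLaw_iff (hD : MeasurableSet D) (hpX : Measurable pX)
    (hpX0 : ∀ x ∈ D, 0 ≤ pX x) (g : E → G) :
    Integrable g (deployLaw D pX) ↔ Integrable (fun x => pX x • g x) (volume.restrict D) := by
  rw [deployLaw, integrable_withDensity_iff_integrable_smul' hpX.ennreal_ofReal
    (.of_forall fun _ => ENNReal.ofReal_lt_top)]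
  refine integrable_congr ?_
  filter_upwards [ae_restrict_mem hD] with x hx
  rw [ENNReal.toReal_ofReal (hpX0 x hx)]

lemma isProbabilityMeasure_deployLaw (hD : MeasurableSet D) (hpX0 : ∀ x ∈ D, 0 ≤ pX x)
    (hone : ∫ x in D, pX x = 1) : IsProbabilityMeasure (deployLaw D pX) := by
  have hint : Integrable pX (volume.restrict D) := by
    by_contra h
    rw [integral_undef h] at hone
    exact zero_ne_one hone
  constructor
  rw [deployLaw, withDensity_apply _ MeasurableSet.univ, Measure.restrict_univ,
    ← ofReal_integral_eq_lintegral_ofReal hint (ae_restrict_of_forall_mem hD hpX0), hone,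
    ENNReal.ofReal_one]

end Deployment

lemma integral_sgn'_add_sub_prod_threshLaw {c s : ℝ} (hc : 0 < c) {ν : Measure ℝ}
    [IsProbabilityMeasure ν] (hmean : ∫ z, z ∂ν = 0) (hs : ∀ᵐ z ∂ν, s + z ∈ Set.Icc (-c) c) :
    ∫ p, sgn' (s + p.1 - p.2) ∂ν.prod (threshLaw c) = s / c := by
  have := isProbabilityMeasure_threshLaw hc
  have hbound : Integrable (fun p : ℝ × ℝ => sgn' (s + p.1 - p.2)) (ν.prod (threshLaw c)) :=
    .of_bound (Measurable.aestronglyMeasurable (by fun_prop)) 1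
      (.of_forall fun _ => (abs_sgn' _).le)
  have hz : Integrable (fun z : ℝ => z) ν :=
    .of_bound aestronglyMeasurable_id (|s| + c) (hs.mono fun z hz => by
      rw [Real.norm_eq_abs, abs_le]
      constructor <;> linarith [neg_abs_le s, le_abs_self s, hz.1, hz.2])
  rw [integral_prod _ hbound]
  calc ∫ z, ∫ t, sgn' (s + z - t) ∂threshLaw c ∂ν = ∫ z, (s + z) / c ∂ν :=
        integral_congr_ae (hs.mono fun z hz => integral_sgn'_sub_threshLaw hc hz)
    _ = s / c := by
        rw [integral_div, integral_add (integrable_const s) hz, hmean]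
        simp

lemma ae_add_mem_Icc_add {ν : Measure ℝ} {a b s : ℝ} (hs : s ∈ Set.Icc (-a) a)
    (hν : ν (Set.Icc (-b) b)ᶜ = 0) : ∀ᵐ z ∂ν, s + z ∈ Set.Icc (-(a + b)) (a + b) := by
  filter_upwards [measure_eq_zero_iff_ae_notMem.1 hν] with z hz
  obtain ⟨hz1, hz2⟩ := not_not.1 hz
  exact ⟨by linarith [hs.1], by linarith [hs.2]⟩

section Sample

noncomputable def coeffSample {E : Type*} (c : ℝ) (pX : E → ℝ) (φ : ℕ → E → ℂ) (f : E → ℝ) (j : ℕ)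
    (w : E × ℝ × ℝ) : ℂ :=
  c * (conj (φ j w.1) / pX w.1) * sgn' (f w.1 + w.2.1 - w.2.2)

lemma alphaHat_eq_mean {E Ω : Type*} (c : ℝ) (pX : E → ℝ) (φ : ℕ → E → ℂ) (f : E → ℝ)
    (X : ℕ → Ω → E) (Z T : ℕ → Ω → ℝ) (n j : ℕ) (ω : Ω) :
    alphaHat c pX φ f X Z T n j ω
      = (n : ℂ)⁻¹ * ∑ i ∈ range n, coeffSample c pX φ f j (X i ω, Z i ω, T i ω) := by
  rw [alphaHat, mul_sum, mul_sum]
  refine sum_congr rfl fun i _ => ?_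
  rw [coeffSample, obsB]
  ring

lemma measurable_coeffSample {E : Type*} [MeasurableSpace E] {c : ℝ} {pX : E → ℝ}
    {φ : ℕ → E → ℂ} {f : E → ℝ} {j : ℕ} (hpX : Measurable pX) (hφ : Measurable (φ j))
    (hf : Measurable f) :
    Measurable (coeffSample c pX φ f j) := by
  unfold coeffSample
  fun_prop

lemma norm_coeffSample {E : Type*} {c : ℝ} {pX : E → ℝ} {φ : ℕ → E → ℂ} {f : E → ℝ} {j : ℕ}
    (w : E × ℝ × ℝ) :
    ‖coeffSample c pX φ f j w‖ = ‖(c : ℂ) * (conj (φ j w.1) / pX w.1)‖ := by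
  rw [coeffSample, norm_mul, Complex.norm_real, Real.norm_eq_abs, abs_sgn', mul_one]

lemma smul_norm_mul_conj_div_sq (p c : ℝ) (z : ℂ) :
    p • ‖(c : ℂ) * (conj z / p)‖ ^ 2 = c ^ 2 * (‖z‖ ^ 2 / p) := by
  rcases eq_or_ne p 0 with rfl | hp
  · simp
  · rw [norm_mul, norm_div, Complex.norm_real, Complex.norm_real, RCLike.norm_conj,
      Real.norm_eq_abs, Real.norm_eq_abs, smul_eq_mul, mul_pow, div_pow, sq_abs, sq_abs]
    field_simp

variable {E : Type*} [MeasureSpace E] {D : Set E} {c : ℝ} {pX : E → ℝ} {φ : ℕ → E → ℂ}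
  {f : E → ℝ} {j : ℕ} {ν : Measure ℝ} [IsProbabilityMeasure ν]

lemma integral_norm_coeffSample_sq [SFinite (volume : Measure E)] (hD : MeasurableSet D)
    (hpX : Measurable pX) (hpX0 : ∀ x ∈ D, 0 ≤ pX x) (hc : 0 < c) :
    ∫ w, ‖coeffSample c pX φ f j w‖ ^ 2 ∂(deployLaw D pX).prod (ν.prod (threshLaw c))
      = c ^ 2 * ∫ x in D, ‖φ j x‖ ^ 2 / pX x := by
  have := isProbabilityMeasure_threshLaw hc
  simp_rw [norm_coeffSample]
  rw [integral_fun_fst (fun x => ‖(c : ℂ) * (conj (φ j x) / pX x)‖ ^ 2), probReal_univ,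
    one_smul, integral_deployLaw hD hpX hpX0, ← integral_const_mul]
  simp_rw [smul_norm_mul_conj_div_sq]

lemma memLp_coeffSample (hD : MeasurableSet D) (hpX : Measurable pX)
    (hpX0 : ∀ x ∈ D, 0 ≤ pX x) (hφ : Measurable (φ j)) (hf : Measurable f)
    (hint : Integrable (fun x => ‖φ j x‖ ^ 2 / pX x) (volume.restrict D)) (hc : 0 < c) :
    MemLp (coeffSample c pX φ f j) 2 ((deployLaw D pX).prod (ν.prod (threshLaw c))) := by
  have := isProbabilityMeasure_threshLaw hc
  refine (memLp_two_iff_integrable_sq_norm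
    (measurable_coeffSample hpX hφ hf).aestronglyMeasurable).2 ?_
  simp_rw [norm_coeffSample]
  refine Integrable.comp_fst ((integrable_deployLaw_iff hD hpX hpX0
    fun x => ‖(c : ℂ) * (conj (φ j x) / pX x)‖ ^ 2).2 ?_) _
  simpa only [smul_norm_mul_conj_div_sq] using hint.const_mul (c ^ 2)

lemma integral_coeffSample [IsFiniteMeasure (deployLaw D pX)] (hD : MeasurableSet D)
    (hpX : Measurable pX) (hpX_pos : ∀ x ∈ D, 0 < pX x) (hφ : Measurable (φ j))
    (hf : Measurable f) (hint : Integrable (fun x => ‖φ j x‖ ^ 2 / pX x) (volume.restrict D))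
    (hc : 0 < c) (hmean : ∫ z, z ∂ν = 0) (hfz : ∀ x ∈ D, ∀ᵐ z ∂ν, f x + z ∈ Set.Icc (-c) c) :
    ∫ w, coeffSample c pX φ f j w ∂(deployLaw D pX).prod (ν.prod (threshLaw c))
      = coeff D f φ j := by
  have := isProbabilityMeasure_threshLaw hc
  have hpX0 : ∀ x ∈ D, 0 ≤ pX x := fun x hx => (hpX_pos x hx).le
  rw [integral_prod _ ((memLp_coeffSample hD hpX hpX0 hφ hf hint hc).integrable one_le_two),
    integral_deployLaw hD hpX hpX0, coeff]
  refine setIntegral_congr_fun hD fun x hx => ?_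
  simp only [coeffSample]
  rw [integral_const_mul, integral_complex_ofReal,
    integral_sgn'_add_sub_prod_threshLaw hc hmean (hfz x hx), Complex.real_smul]
  have hpx : (pX x : ℂ) ≠ 0 := Complex.ofReal_ne_zero.2 (hpX_pos x hx).ne'
  have hc' : (c : ℂ) ≠ 0 := Complex.ofReal_ne_zero.2 hc.ne'
  push_cast
  field_simp

end Sample

section Field

variable {E : Type*} [MeasureSpace E] {D : Set E} {f : E → ℝ} {φ : ℕ → E → ℂ}

lemma summable_norm_coeff_sq (hf : MemLp (fun x => (f x : ℂ)) 2 (volume.restrict D))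
    (hφ : ∀ j, MemLp (φ j) 2 (volume.restrict D))
    (hON : ∀ j k, ∫ x in D, φ j x * conj (φ k x) = if j = k then 1 else 0) :
    Summable fun j => ‖coeff D f φ j‖ ^ 2 :=
  summable_of_sum_range_le (fun _ => by positivity) (sum_norm_sq_integral_mul_conj_le hf hφ hON)

lemma tailErr_eq_sub (hsum : Summable fun j => ‖coeff D f φ j‖ ^ 2)
    (hPars : ∑' j, ‖coeff D f φ j‖ ^ 2 = ∫ x in D, ‖(f x : ℂ)‖ ^ 2) (m : ℕ) :
    tailErr D f φ m = (∫ x in D, ‖(f x : ℂ)‖ ^ 2) - ∑ j ∈ range m, ‖coeff D f φ j‖ ^ 2 := by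
  rw [tailErr, ← hPars, ← hsum.sum_add_tsum_nat_add m]
  simp [add_comm]

lemma tendsto_tailErr_atTop : Tendsto (tailErr D f φ) atTop (𝓝 0) :=
  (tendsto_sum_nat_add fun j => ‖coeff D f φ j‖ ^ 2).congr fun m => by simp [tailErr, add_comm]

lemma intMSE_eq_tailErr_add {Ω : Type*} [MeasurableSpace Ω] (P : Measure Ω)
    [IsProbabilityMeasure P] (c : ℝ) (pX : E → ℝ) (X : ℕ → Ω → E) (Z T : ℕ → Ω → ℝ) (n m : ℕ)
    (hf : MemLp (fun x => (f x : ℂ)) 2 (volume.restrict D))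
    (hφ : ∀ j, MemLp (φ j) 2 (volume.restrict D))
    (hON : ∀ j k, ∫ x in D, φ j x * conj (φ k x) = if j = k then 1 else 0)
    (hPars : ∑' j, ‖coeff D f φ j‖ ^ 2 = ∫ x in D, ‖(f x : ℂ)‖ ^ 2)
    (hint : ∀ j, Integrable
      (fun ω => ‖alphaHat c pX φ f X Z T n j ω - coeff D f φ j‖ ^ 2) P) :
    intMSE P D c pX φ f X Z T n m
      = tailErr D f φ m
        + ∑ j ∈ range m, ∫ ω, ‖alphaHat c pX φ f X Z T n j ω - coeff D f φ j‖ ^ 2 ∂P := by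
  have hpt : ∀ ω, ∫ x in D, ‖(f x : ℂ) - fieldEst c pX φ f X Z T n m x ω‖ ^ 2
      = tailErr D f φ m + ∑ j ∈ range m, ‖alphaHat c pX φ f X Z T n j ω - coeff D f φ j‖ ^ 2 :=
    fun ω => by
      rw [tailErr_eq_sub (summable_norm_coeff_sq hf hφ hON) hPars]
      exact integral_norm_sub_sum_sq_of_orthonormal hf hφ hON
        (fun j => alphaHat c pX φ f X Z T n j ω) m
  rw [intMSE, integral_congr_ae (.of_forall hpt),
    integral_add (integrable_const _) (integrable_finsetSum _ fun j _ => hint j),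
    integral_finsetSum _ fun j _ => hint j]
  simp

lemma intMSE_nonneg {Ω : Type*} [MeasurableSpace Ω] (P : Measure Ω) (c : ℝ) (pX : E → ℝ)
    (X : ℕ → Ω → E) (Z T : ℕ → Ω → ℝ) (n m : ℕ) : 0 ≤ intMSE P D c pX φ f X Z T n m :=
  integral_nonneg fun _ => integral_nonneg fun _ => by positivity

lemma intMSE_le_tailErr_add {Ω : Type*} [MeasurableSpace Ω] (P : Measure Ω)
    [IsProbabilityMeasure P] {μ : Measure (E × ℝ × ℝ)} {c : ℝ} {pX : E → ℝ} {X : ℕ → Ω → E}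
    {Z T : ℕ → Ω → ℝ} (hW : ∀ i, Measurable fun ω => (X i ω, Z i ω, T i ω))
    (hlaw : ∀ i, P.map (fun ω => (X i ω, Z i ω, T i ω)) = μ)
    (hind : Pairwise fun i k =>
      (fun ω => (X i ω, Z i ω, T i ω)) ⟂ᵢ[P] fun ω => (X k ω, Z k ω, T k ω))
    (hf : MemLp (fun x => (f x : ℂ)) 2 (volume.restrict D))
    (hφ : ∀ j, MemLp (φ j) 2 (volume.restrict D))
    (hON : ∀ j k, ∫ x in D, φ j x * conj (φ k x) = if j = k then 1 else 0)
    (hPars : ∑' j, ‖coeff D f φ j‖ ^ 2 = ∫ x in D, ‖(f x : ℂ)‖ ^ 2)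
    (hmeas : ∀ j, Measurable (coeffSample c pX φ f j))
    (hsample : ∀ j, MemLp (coeffSample c pX φ f j) 2 μ)
    (hmean : ∀ j, ∫ w, coeffSample c pX φ f j w ∂μ = coeff D f φ j) {n : ℕ} (hn : n ≠ 0)
    (m : ℕ) :
    intMSE P D c pX φ f X Z T n m
      ≤ tailErr D f φ m + 1 / n * ∑ j ∈ range m, ∫ w, ‖coeffSample c pX φ f j w‖ ^ 2 ∂μ := by
  have hint : ∀ j, Integrable
      (fun ω => ‖alphaHat c pX φ f X Z T n j ω - coeff D f φ j‖ ^ 2) P := fun j => by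
    simp_rw [alphaHat_eq_mean, ← hmean j]
    exact ((memLp_empiricalMean (fun i => (hW i).aemeasurable) hlaw (hsample j) n).sub
      (memLp_const _)).integrable_norm_pow two_ne_zero
  rw [intMSE_eq_tailErr_add P c pX X Z T n m hf hφ hON hPars hint, mul_sum]
  gcongr with j
  simp_rw [alphaHat_eq_mean, ← hmean j]
  exact (integral_norm_empiricalMean_sub_sq_le hW hlaw hind (hmeas j) (hsample j) hn).trans_eq
    (one_div_mul_eq_div _ _).symm

end Field

theorem stmt6_general
    {d : ℕ} {D : Set (Fin d → ℝ)} (hDcomp : IsCompact D)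
    (hDfin : volume D < ⊤)
    {a b c : ℝ} (ha : 0 < a) (hb : 0 < b) (hc : c = a + b)
    {f : (Fin d → ℝ) → ℝ} (hfmeas : Measurable f)
    (hfbd : ∀ x ∈ D, f x ∈ Set.Icc (-a) a)
    {pX : (Fin d → ℝ) → ℝ} (hpXmeas : Measurable pX)
    (hpXpos : ∀ x ∈ D, 0 < pX x) (hpXone : (∫ x in D, pX x) = 1)
    {φ : ℕ → (Fin d → ℝ) → ℂ} (hφmeas : ∀ j, Measurable (φ j))
    (hφL2 : ∀ j, MemLp (φ j) 2 (volume.restrict D))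
    (hON : ∀ j k, (∫ x in D, φ j x * (starRingEnd ℂ) (φ k x)) = if j = k then 1 else 0)
    (hComplete : ∀ g : (Fin d → ℝ) → ℂ, Measurable g → MemLp g 2 (volume.restrict D) →
      (∑' j : ℕ, ‖∫ x in D, g x * (starRingEnd ℂ) (φ j x)‖ ^ 2) = ∫ x in D, ‖g x‖ ^ 2)
    {Ω : Type*} [MeasurableSpace Ω] (P : Measure Ω) [IsProbabilityMeasure P]
    (X : ℕ → Ω → (Fin d → ℝ)) (Z T : ℕ → Ω → ℝ)
    (hXmeas : ∀ i, Measurable (X i)) (hZmeas : ∀ i, Measurable (Z i))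
    (hTmeas : ∀ i, Measurable (T i))
    (μZ : Measure ℝ) [IsProbabilityMeasure μZ]
    (hZmean : (∫ z, z ∂μZ) = 0) (hZsupp : μZ (Set.Icc (-b) b)ᶜ = 0)
    (hlaw : ∀ i, Measure.map (fun ω => (X i ω, Z i ω, T i ω)) P =
      (deployLaw D pX).prod (μZ.prod (threshLaw c)))
    (hiid : iIndepFun (fun i ω => (X i ω, Z i ω, T i ω)) P)
    (hInt : ∀ j, Integrable (fun x => ‖φ j x‖ ^ 2 / pX x) (volume.restrict D))
    (mfun : ℕ → ℕ) (hm1 : Tendsto mfun atTop atTop)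
    (hm2 : Tendsto (fun n : ℕ =>
        (1 / (n : ℝ)) * ∑ j ∈ Finset.range (mfun n), ∫ x in D, ‖φ j x‖ ^ 2 / pX x)
      atTop (𝓝 0)) :
    Tendsto (fun n : ℕ => intMSE P D c pX φ f X Z T n (mfun n)) atTop (𝓝 0) := by
  subst hc
  have hc : 0 < a + b := by positivity
  have hD := hDcomp.measurableSet
  have hpX0 : ∀ x ∈ D, 0 ≤ pX x := fun x hx => (hpXpos x hx).le
  have : IsFiniteMeasure (volume.restrict D) := isFiniteMeasure_restrict.2 hDfin.ne
  have := isProbabilityMeasure_deployLaw hD hpX0 hpXone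
  have hfL2 : MemLp (fun x => (f x : ℂ)) 2 (volume.restrict D) :=
    .of_bound (by fun_prop) a <| (ae_restrict_mem hD).mono fun x hx => by
      simpa [abs_le] using hfbd x hx
  have hmean := fun j => integral_coeffSample hD hpXmeas hpXpos (hφmeas j) hfmeas (hInt j) hc
    hZmean fun x hx => ae_add_mem_Icc_add (hfbd x hx) hZsupp
  have hbound : ∀ n ≠ 0, intMSE P D (a + b) pX φ f X Z T n (mfun n) ≤ tailErr D f φ (mfun n)
      + (a + b) ^ 2 * (1 / n * ∑ j ∈ range (mfun n), ∫ x in D, ‖φ j x‖ ^ 2 / pX x) :=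
    fun n hn => by
      refine (intMSE_le_tailErr_add P (fun i => (hXmeas i).prodMk ((hZmeas i).prodMk (hTmeas i)))
        hlaw (fun i k hik => hiid.indepFun hik) hfL2 hφL2 hON (hComplete _ (by fun_prop) hfL2)
        (fun j => measurable_coeffSample hpXmeas (hφmeas j) hfmeas)
        (fun j => memLp_coeffSample hD hpXmeas hpX0 (hφmeas j) hfmeas (hInt j) hc) hmean hn
        (mfun n)).trans_eq ?_
      simp_rw [integral_norm_coeffSample_sq hD hpXmeas hpX0 hc, ← mul_sum]
      ring
  refine squeeze_zero' (.of_forall fun n => intMSE_nonneg P _ pX X Z T n _)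
    ((eventually_ne_atTop 0).mono hbound) ?_
  simpa using (tendsto_tailErr_atTop.comp hm1).add (hm2.const_mul ((a + b) ^ 2))

/-- **Integrated MSE consistency of the field estimate (Corollary 1).**
If `m(n) → ∞` and `(1/n) ∑_(j<m(n)) ∫_D |φ_j|²/p_X → 0`, then
`E[‖f − f̂_(n,m(n))‖²] → 0`. -/
theorem stmt6
    {d : ℕ} {D : Set (Fin d → ℝ)} (hDcomp : IsCompact D)
    (hDpos : 0 < volume D) (hDfin : volume D < ⊤)
    {a b c : ℝ} (ha : 0 < a) (hb : 0 < b) (hc : c = a + b)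
    {f : (Fin d → ℝ) → ℝ} (hfmeas : Measurable f)
    (hfbd : ∀ x ∈ D, f x ∈ Set.Icc (-a) a)
    {pX : (Fin d → ℝ) → ℝ} (hpXmeas : Measurable pX)
    (hpXpos : ∀ x ∈ D, 0 < pX x) (hpXone : (∫ x in D, pX x) = 1)
    {φ : ℕ → (Fin d → ℝ) → ℂ} (hφmeas : ∀ j, Measurable (φ j))
    (hφL2 : ∀ j, MemLp (φ j) 2 (volume.restrict D))
    (hON : ∀ j k, (∫ x in D, φ j x * (starRingEnd ℂ) (φ k x)) = if j = k then 1 else 0)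
    (hComplete : ∀ g : (Fin d → ℝ) → ℂ, Measurable g → MemLp g 2 (volume.restrict D) →
      (∑' j : ℕ, ‖∫ x in D, g x * (starRingEnd ℂ) (φ j x)‖ ^ 2) = ∫ x in D, ‖g x‖ ^ 2)
    {Ω : Type*} [MeasurableSpace Ω] (P : Measure Ω) [IsProbabilityMeasure P]
    (X : ℕ → Ω → (Fin d → ℝ)) (Z T : ℕ → Ω → ℝ)
    (hXmeas : ∀ i, Measurable (X i)) (hZmeas : ∀ i, Measurable (Z i))
    (hTmeas : ∀ i, Measurable (T i))
    (μZ : Measure ℝ) [IsProbabilityMeasure μZ]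
    (hZmean : (∫ z, z ∂μZ) = 0) (hZsupp : μZ (Set.Icc (-b) b)ᶜ = 0)
    (hlaw : ∀ i, Measure.map (fun ω => (X i ω, Z i ω, T i ω)) P =
      (deployLaw D pX).prod (μZ.prod (threshLaw c)))
    (hiid : iIndepFun (fun i ω => (X i ω, Z i ω, T i ω)) P)
    (hInt : ∀ j, Integrable (fun x => ‖φ j x‖ ^ 2 / pX x) (volume.restrict D))
    (mfun : ℕ → ℕ) (hm1 : Tendsto mfun atTop atTop)
    (hm2 : Tendsto (fun n : ℕ =>
        (1 / (n : ℝ)) * ∑ j ∈ Finset.range (mfun n), ∫ x in D, ‖φ j x‖ ^ 2 / pX x)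
      atTop (𝓝 0)) :
    Tendsto (fun n : ℕ => intMSE P D c pX φ f X Z T n (mfun n)) atTop (𝓝 0) :=
  stmt6_general hDcomp hDfin ha hb hc hfmeas hfbd hpXmeas hpXpos hpXone hφmeas hφL2 hON hComplete P
    X Z T hXmeas hZmeas hTmeas μZ hZmean hZsupp hlaw hiid hInt mfun hm1 hm2
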